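/- arXiv:2402.00958 — 4 statements merged into one kernel-verified Lean document; each statement's English description precedes it below -/
import Mathlib

section
/- Simulations with arbitrary functorial orders need not reflect nexttime properties: for the powerset functor with order u ⊑ v iff v ⊆ u, taking X = {x₁,x₂}, Y = {y₁,y₂}, c(x₁) = {x₁,x₂}, c(x₂) = {x₂}, d(y₁) = {y₂}, d(y₂) = {y₂}, the relation R = {(x₁,y₂)} is a ⊑-simulation, y₂ satisfies ○{y₂}, but x₁ does not satisfy ○(R⁻¹{y₂}). -/
/-- Relation lifting of the powerset functor (characterized form). -/
def RelLiftP {X Y : Type*} (R : X → Y → Prop) (u : Set X) (v : Set Y) : Prop :=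
  (∀ a ∈ u, ∃ b ∈ v, R a b) ∧ (∀ b ∈ v, ∃ a ∈ u, R a b)

/-- Simulation for the order u ⊑ v iff v ⊆ u (reverse inclusion). -/
def IsSimRev {X Y : Type*} (c : X → Set X) (d : Y → Set Y) (R : X → Y → Prop) : Prop :=
  ∀ x y, R x y → ∃ u v, u ⊆ c x ∧ d y ⊆ v ∧ RelLiftP R u v

def invImg {X Y : Type*} (R : X → Y → Prop) (P : Set Y) : Set X := {x | ∃ y ∈ P, R x y}

theorem stmt7 (c : Fin 2 → Set (Fin 2)) (d : Fin 2 → Set (Fin 2))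
    (hc1 : c 0 = {0, 1}) (hc2 : c 1 = {1})
    (hd1 : d 0 = {1}) (hd2 : d 1 = {1})
    (R : Fin 2 → Fin 2 → Prop) (hR : ∀ x y, R x y ↔ x = 0 ∧ y = 1) :
    IsSimRev c d R ∧ d 1 ⊆ ({1} : Set (Fin 2)) ∧
      ¬ c 0 ⊆ invImg R ({1} : Set (Fin 2)) := by
  refine ⟨?_, ?_, ?_⟩
  · intro x y hxy
    obtain ⟨hx, hy⟩ := (hR x y).mp hxy
    subst hx hy
    refine ⟨{0}, {1}, ?_, ?_, ?_, ?_⟩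
    · rw [hc1]; intro a ha; simp_all
    · rw [hd2]
    · intro a ha; exact ⟨1, rfl, (hR a 1).mpr ⟨ha, rfl⟩⟩
    · intro b hb; exact ⟨0, rfl, (hR 0 b).mpr ⟨rfl, hb⟩⟩
  · rw [hd2]
  · intro h
    have h1 : (1 : Fin 2) ∈ c 0 := by rw [hc1]; simp
    obtain ⟨y, hy, hRy⟩ := h h1
    have := (hR 1 y).mp hRy
    simp at this
end

section
/- Simulations with the subset order need not reflect eventually properties: for the powerset functor with order u ⊑ v iff u ⊆ v, taking X = {x₁,x₂}, Y = {y₁,y₂}, c(x₁) = {x₁}, c(x₂) = {x₂}, d(y₁) = {y₁,y₂}, d(y₂) = {y₂}, the relation R = {(x₁,y₁)} is a ⊑-simulation, y₁ satisfies ◇{y₂}, but x₁ does not satisfy ◇(R⁻¹{y₂}) = ◇∅. -/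
/-- Simulation for the subset order u ⊑ v iff u ⊆ v. -/
def IsSimSub {X Y : Type*} (c : X → Set X) (d : Y → Set Y) (R : X → Y → Prop) : Prop :=
  ∀ x y, R x y → ∃ u v, c x ⊆ u ∧ v ⊆ d y ∧ RelLiftP R u v

def CoalgInvariant {X : Type*} (c : X → Set X) (Q : Set X) : Prop := ∀ x ∈ Q, c x ⊆ Q

/-- x ⊨ ◇Q iff ¬(x ⊨ □¬Q). -/
def SatDiamond {X : Type*} (c : X → Set X) (Q : Set X) (x : X) : Prop :=
  ¬ ∃ T : Set X, CoalgInvariant c T ∧ T ⊆ Qᶜ ∧ x ∈ T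

theorem stmt8 (c : Fin 2 → Set (Fin 2)) (d : Fin 2 → Set (Fin 2))
    (hc1 : c 0 = {0}) (hc2 : c 1 = {1})
    (hd1 : d 0 = {0, 1}) (hd2 : d 1 = {1})
    (R : Fin 2 → Fin 2 → Prop) (hR : ∀ x y, R x y ↔ x = 0 ∧ y = 0) :
    IsSimSub c d R ∧ SatDiamond d ({1} : Set (Fin 2)) 0 ∧
      ¬ SatDiamond c (invImg R ({1} : Set (Fin 2))) 0 := by
  refine ⟨?_, ?_, ?_⟩
  · intro x y hxy
    obtain ⟨hx, hy⟩ := (hR x y).mp hxy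
    subst hx; subst hy
    refine ⟨{0}, {0}, by rw [hc1], by rw [hd1]; intro a ha; simp at ha; simp [ha], ?_, ?_⟩
    · intro a ha; exact ⟨0, by simp, (hR a 0).mpr ⟨by simpa using ha, rfl⟩⟩
    · intro b hb; exact ⟨0, by simp, (hR 0 b).mpr ⟨rfl, by simpa using hb⟩⟩
  · rintro ⟨T, hInv, hsub, h0⟩
    have h1 : (1 : Fin 2) ∈ T := hInv 0 h0 (by rw [hd1]; simp)
    exact hsub h1 rfl
  · intro h
    apply h
    refine ⟨{0}, ?_, ?_, rfl⟩
    · intro x hx; simp at hx; subst hx; rw [hc1]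
    · intro x hx
      simp only [Set.mem_singleton_iff] at hx; subst hx
      rintro ⟨y, hy, hxy⟩
      have := ((hR 0 y).mp hxy).2
      simp only [Set.mem_singleton_iff] at hy
      rw [this] at hy
      exact absurd hy (by decide)
end

section
/- Let R be a ⊑-simulation between powerset coalgebras c : X → P(X) and d : Y → P(Y), where ⊑ is a down-closed order on P. If Q ⊆ Y is an invariant for d, then R⁻¹Q is an invariant for c. -/
theorem stmt12 {X Y : Type u} (c : X → Set X) (d : Y → Set Y)
    (ord : ∀ Z : Type u, Set Z → Set Z → Prop)
    (hdc : ∀ (Z : Type u) (a b Q : Set Z), ord Z a b → b ⊆ Q → a ⊆ Q)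
    (R : X → Y → Prop)
    (hsim : ∀ x y, R x y → ∃ u v, ord X (c x) u ∧ ord Y v (d y) ∧ RelLiftP R u v)
    (Q : Set Y) (hQ : CoalgInvariant d Q) : CoalgInvariant c (invImg R Q) := by
  rintro x ⟨y, hyQ, hxy⟩
  obtain ⟨u, v, hcu, hvd, hl, _⟩ := hsim x y hxy
  have hvQ : v ⊆ Q := hdc Y v (d y) Q hvd (hQ y hyQ)
  refine hdc X (c x) u _ hcu ?_
  intro a ha
  obtain ⟨b, hbv, hab⟩ := hl a ha
  exact ⟨b, hvQ hbv, hab⟩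
end

section
/- Let R be a simulation between Kripke coalgebras c : X → P(AP) × P(X) and d : Y → P(AP) × P(Y) for the order (u,v) ⊑ (u',v') iff u' ⊆ u and v ⊆ v'. Then for every negation-free temporal formula φ built from atomic propositions, ∧, ∨, ○ and □, and all x R y: y ⊨ φ implies x ⊨ φ. -/
inductive NFormula (AP : Type*) where
  | atom : AP → NFormula AP
  | and  : NFormula AP → NFormula AP → NFormula AP
  | or   : NFormula AP → NFormula AP → NFormula AP
  | next : NFormula AP → NFormula AP
  | box  : NFormula AP → NFormula AP

def Sat {AP X : Type*} (c : X → Set AP × Set X) : NFormula AP → X → Prop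
  | .atom p, x => p ∈ (c x).1
  | .and φ ψ, x => Sat c φ x ∧ Sat c ψ x
  | .or φ ψ, x => Sat c φ x ∨ Sat c ψ x
  | .next φ, x => ∀ x' ∈ (c x).2, Sat c φ x'
  | .box φ, x => ∃ T : Set X, (∀ t ∈ T, (c t).2 ⊆ T) ∧ x ∈ T ∧ ∀ t ∈ T, Sat c φ t

/-- Simulation for the Kripke order (u,v) ⊑ (u',v') iff u' ⊆ u ∧ v ⊆ v'. -/
def IsKSim {AP X Y : Type*} (c : X → Set AP × Set X) (d : Y → Set AP × Set Y)
    (R : X → Y → Prop) : Prop :=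
  ∀ x y, R x y → ∃ (a : Set AP) (u : Set X) (b : Set AP) (v : Set Y),
    (a ⊆ (c x).1 ∧ (c x).2 ⊆ u) ∧ ((d y).1 ⊆ b ∧ v ⊆ (d y).2) ∧ a = b ∧
    (∀ p ∈ u, ∃ q ∈ v, R p q) ∧ (∀ q ∈ v, ∃ p ∈ u, R p q)

theorem stmt18 {AP X Y : Type*} (c : X → Set AP × Set X) (d : Y → Set AP × Set Y)
    (R : X → Y → Prop) (h : IsKSim c d R) :
    ∀ (φ : NFormula AP) (x : X) (y : Y), R x y → Sat d φ y → Sat c φ x := by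
  intro φ
  induction φ with
  | atom p =>
    intro x y hxy hs
    obtain ⟨a, u, b, v, ⟨ha, hu⟩, ⟨hb, hv⟩, hab, _, _⟩ := h x y hxy
    exact ha (hab ▸ hb hs)
  | and φ ψ ihφ ihψ =>
    intro x y hxy hs
    exact ⟨ihφ x y hxy hs.1, ihψ x y hxy hs.2⟩
  | or φ ψ ihφ ihψ =>
    intro x y hxy hs
    exact hs.elim (fun h' => Or.inl (ihφ x y hxy h')) (fun h' => Or.inr (ihψ x y hxy h'))
  | next φ ih =>
    intro x y hxy hs x' hx'
    obtain ⟨a, u, b, v, ⟨ha, hu⟩, ⟨hb, hv⟩, hab, hfw, hbw⟩ := h x y hxy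
    obtain ⟨q, hq, hRq⟩ := hfw x' (hu hx')
    exact ih x' q hRq (hs q (hv hq))
  | box φ ih =>
    intro x y hxy hs
    obtain ⟨T, hinv, hyT, hsat⟩ := hs
    refine ⟨{x' | ∃ y' ∈ T, R x' y'}, ?_, ⟨y, hyT, hxy⟩, ?_⟩
    · rintro t ⟨y₀, hy₀, hRt⟩ x' hx'
      obtain ⟨a, u, b, v, ⟨ha, hu⟩, ⟨hb, hv⟩, hab, hfw, hbw⟩ := h t y₀ hRt
      obtain ⟨q, hq, hRq⟩ := hfw x' (hu hx')
      exact ⟨q, hinv y₀ hy₀ (hv hq), hRq⟩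
    · rintro t ⟨y₀, hy₀, hRt⟩
      exact ih t y₀ hRt (hsat y₀ hy₀)
end
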